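/- arXiv:1706.06269 — 2 statements merged into one kernel-verified Lean document; each statement's English description precedes it below -/
import Mathlib

section
/- Let α₀ and β be units of R, let λ = α₀^{p^s} + γβ, and suppose x^n − α₀ is basic irreducible over R. Let C = ⟨(x^n − α₀)^ν⟩ be an ideal of R[x]/⟨x^{np^s} − λ⟩, where 0 ≤ ν ≤ 2p^s. Then the RT distance of C is: 1 if 0 ≤ ν ≤ p^s; nν − np^s + 1 if p^s + 1 ≤ ν ≤ 2p^s − 1; and 0 if ν = 2p^s. -/
open Polynomial

/-- The unique representative of degree `< deg q` of an element of `A[x]/⟨q⟩`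
(for `q` monic). -/
noncomputable def polyRep {A : Type} [CommRing A] (q : A[X]) (c : A[X] ⧸ Ideal.span {q}) :
    A[X] :=
  Function.surjInv Ideal.Quotient.mk_surjective c %ₘ q

open Classical in
/-- RT (Rosenbloom–Tsfasman) weight of a codeword: `1 + deg` of its representative,
and `0` for the zero codeword. -/
noncomputable def wRT {A : Type} [CommRing A] (q : A[X]) (c : A[X] ⧸ Ideal.span {q}) : ℕ :=
  if c = 0 then 0 else (polyRep q c).natDegree + 1

/-- RT distance of a code (an ideal of `A[x]/⟨q⟩`); `0` for the zero code. -/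
noncomputable def dRT {A : Type} [CommRing A] (q : A[X])
    (I : Ideal (A[X] ⧸ Ideal.span {q})) : ℕ :=
  sInf {w : ℕ | ∃ c ∈ I, c ≠ 0 ∧ w = wRT q c}

/-! Write `f = x^n − α₀`, `N = p^s` and `q = x^{nN} − λ`. The residue field has
characteristic `p`, so `f^N ≡ x^{nN} − α₀^N` modulo `γ`; this sharpens to `f^N = q + γ V`
with `V ≡ β` modulo `f`. In `R[x]/⟨q⟩` the class of `f` is therefore nilpotent, `V` is a
unit, and `f^{N+t}` is `γ f^t` up to a unit: so `γ f^(ν − N)` (RT weight `n(ν − N) + 1`,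
truncated subtraction) lies in `⟨f^ν⟩`, and `f^{2N} = 0`. Conversely, let `r` be the
reduced representative of a nonzero element of `⟨f^{N+t}⟩`. Modulo `γ` it is divisible by
`q`, of larger degree, so `r = γ r₁`; comparing with `f^{N+t} g` modulo `q` shows that `f^t`
divides `r₁` modulo `γ`, and since `γ` annihilates only `⟨γ⟩`, `deg r` is at least the
degree of `r₁` modulo `γ`, hence at least `nt`. -/

section RTDistance

variable {A : Type} [CommRing A] {q : A[X]}

lemma mk_polyRep (c : A[X] ⧸ Ideal.span {q}) :
    Ideal.Quotient.mk (Ideal.span {q}) (polyRep q c) = c := by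
  rw [polyRep, modByMonic_eq_sub_mul_div, map_sub,
    Function.surjInv_eq Ideal.Quotient.mk_surjective, sub_eq_self, Ideal.Quotient.eq_zero_iff_mem]
  exact Ideal.mul_mem_right _ _ (Ideal.mem_span_singleton_self q)

lemma polyRep_mk [Nontrivial A] (hq : q.Monic) {g : A[X]} (hg : g.degree < q.degree) :
    polyRep q (Ideal.Quotient.mk (Ideal.span {q}) g) = g := by
  rw [polyRep, modByMonic_eq_of_dvd_sub hq (p₂ := g), (modByMonic_eq_self_iff hq).mpr hg]
  rw [← Ideal.mem_span_singleton, ← Ideal.Quotient.eq,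
    Function.surjInv_eq Ideal.Quotient.mk_surjective]

lemma degree_polyRep_lt [Nontrivial A] (hq : q.Monic) (c : A[X] ⧸ Ideal.span {q}) :
    (polyRep q c).degree < q.degree :=
  degree_modByMonic_lt _ hq

lemma mk_ne_zero_of_degree_lt (hq : q.Monic) {g : A[X]} (hg : g.degree < q.degree) (hg0 : g ≠ 0) :
    Ideal.Quotient.mk (Ideal.span {q}) g ≠ 0 := by
  rw [Ne, Ideal.Quotient.eq_zero_iff_mem, Ideal.mem_span_singleton]
  exact hq.not_dvd_of_degree_lt hg0 hg

lemma wRT_mk_of_degree_lt [Nontrivial A] (hq : q.Monic) {g : A[X]} (hg : g.degree < q.degree)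
    (hg0 : g ≠ 0) : wRT q (Ideal.Quotient.mk (Ideal.span {q}) g) = g.natDegree + 1 := by
  rw [wRT, if_neg (mk_ne_zero_of_degree_lt hq hg hg0), polyRep_mk hq hg]

theorem dRT_eq_natDegree_add_one [Nontrivial A] (hq : q.Monic) {I : Ideal (A[X] ⧸ Ideal.span {q})}
    {g : A[X]} (hg : g.degree < q.degree) (hg0 : g ≠ 0)
    (hgI : Ideal.Quotient.mk (Ideal.span {q}) g ∈ I)
    (hmin : ∀ r : A[X], r.degree < q.degree → r ≠ 0 →
      Ideal.Quotient.mk (Ideal.span {q}) r ∈ I → g.natDegree ≤ r.natDegree) :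
    dRT q I = g.natDegree + 1 := by
  refine IsLeast.csInf_eq
    ⟨⟨_, hgI, mk_ne_zero_of_degree_lt hq hg hg0, (wRT_mk_of_degree_lt hq hg hg0).symm⟩, ?_⟩
  rintro _ ⟨c, hcI, hc0, rfl⟩
  obtain ⟨r, hr, rfl⟩ : ∃ r : A[X], r.degree < q.degree ∧ Ideal.Quotient.mk _ r = c :=
    ⟨polyRep q c, degree_polyRep_lt hq c, mk_polyRep c⟩
  have hr0 : r ≠ 0 := by
    rintro rfl
    exact hc0 (map_zero _)
  rw [wRT_mk_of_degree_lt hq hr hr0]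
  exact Nat.succ_le_succ (hmin r hr hr0 hcI)

lemma dRT_bot : dRT q ⊥ = 0 := by
  simp [dRT]

lemma exists_dvd_sub_of_mk_mem_span {r a : A[X]}
    (h : Ideal.Quotient.mk (Ideal.span {q}) r ∈ Ideal.span {Ideal.Quotient.mk _ a}) :
    ∃ g : A[X], q ∣ r - a * g := by
  obtain ⟨z, hz⟩ := Ideal.mem_span_singleton.mp h
  obtain ⟨g, rfl⟩ := Ideal.Quotient.mk_surjective z
  rw [← map_mul] at hz
  exact ⟨g, Ideal.mem_span_singleton.mp (Ideal.Quotient.eq.mp hz)⟩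

end RTDistance

section Reduction

variable {R K : Type} [CommRing R] [CommRing K] {γ : R} {φ : R →+* K}

lemma map_eq_zero_iff_C_dvd (hφ : RingHom.ker φ = Ideal.span {γ}) {g : R[X]} :
    g.map φ = 0 ↔ C γ ∣ g := by
  rw [C_dvd_iff_dvd_coeff, Polynomial.ext_iff]
  simp only [coeff_map, coeff_zero, ← RingHom.mem_ker, hφ, Ideal.mem_span_singleton]

lemma map_eq_zero_of_C_mul_eq_zero (hann : ∀ a, γ * a = 0 → φ a = 0) {g : R[X]}
    (h : C γ * g = 0) : g.map φ = 0 := by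
  ext i
  simpa using hann _ (by simpa [coeff_C_mul] using congrArg (coeff · i) h)

lemma map_dvd_map_of_C_mul_eq_mul (hφ : RingHom.ker φ = Ideal.span {γ})
    (hann : ∀ a, γ * a = 0 → φ a = 0) {q a b : R[X]} (hq : q.Monic) (h : C γ * a = q * b) :
    q.map φ ∣ a.map φ := by
  have hb : b.map φ = 0 := by
    rw [← (hq.map φ).mul_right_eq_zero_iff, ← Polynomial.map_mul, ← h,
      (map_eq_zero_iff_C_dvd hφ).mpr (dvd_mul_right _ _)]
  obtain ⟨b', rfl⟩ := (map_eq_zero_iff_C_dvd hφ).mp hb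
  have hab : C γ * (a - q * b') = 0 := by linear_combination h
  refine ⟨b'.map φ, ?_⟩
  rw [← Polynomial.map_mul, ← sub_eq_zero, ← Polynomial.map_sub]
  exact map_eq_zero_of_C_mul_eq_zero hann hab

lemma natDegree_map_le_natDegree_C_mul (hann : ∀ a, γ * a = 0 → φ a = 0) (r : R[X]) :
    (r.map φ).natDegree ≤ (C γ * r).natDegree := by
  by_cases hr : r.map φ = 0
  · simp [hr]
  refine le_natDegree_of_ne_zero fun h => hr (leadingCoeff_eq_zero.mp ?_)
  rw [coeff_C_mul] at h
  rw [leadingCoeff, coeff_map, hann _ h]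

variable {f q V : R[X]} {N : ℕ}

lemma map_eq_pow_of_pow_eq_add (hφ : RingHom.ker φ = Ideal.span {γ})
    (hfq : f ^ N = q + C γ * V) : q.map φ = (f.map φ) ^ N := by
  rw [← Polynomial.map_pow, hfq, Polynomial.map_add,
    (map_eq_zero_iff_C_dvd hφ).mpr (dvd_mul_right _ _), add_zero]

theorem mul_natDegree_le_natDegree_of_dvd_sub_pow_mul [Nontrivial K]
    (hφ : RingHom.ker φ = Ideal.span {γ}) (hγ2 : γ ^ 2 = 0)
    (hann : ∀ a, γ * a = 0 → φ a = 0) (hf : f.Monic) (hq : q.Monic)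
    (hfq : f ^ N = q + C γ * V) {t : ℕ} (htN : t ≤ N)
    {r g : R[X]} (hr : r.degree < q.degree) (hr0 : r ≠ 0) (hrq : q ∣ r - f ^ (N + t) * g) :
    t * f.natDegree ≤ r.natDegree := by
  have hqf := map_eq_pow_of_pow_eq_add hφ hfq
  obtain ⟨w, hw⟩ := hrq
  have hr_red : r.map φ = 0 := by
    by_contra hne
    refine (hq.map φ).not_dvd_of_degree_lt hne ((degree_map_le).trans_lt ?_) ?_
    · rwa [hq.degree_map]
    · rw [show r = q * w + f ^ N * (f ^ t * g) by linear_combination hw, Polynomial.map_add,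
        Polynomial.map_mul, Polynomial.map_mul, Polynomial.map_pow, ← hqf]
      exact dvd_add (dvd_mul_right _ _) (dvd_mul_right _ _)
  obtain ⟨r₁, rfl⟩ := (map_eq_zero_iff_C_dvd hφ).mp hr_red
  have hmul : C γ * (r₁ - V * (f ^ t * g)) = q * (f ^ t * g + w) := by
    linear_combination hw + (f ^ t * g) * hfq
  have hdvd : (f.map φ) ^ t ∣ r₁.map φ := by
    have h := (pow_dvd_pow _ htN).trans (hqf ▸ map_dvd_map_of_C_mul_eq_mul hφ hann hq hmul)
    rw [Polynomial.map_sub, Polynomial.map_mul, Polynomial.map_mul, Polynomial.map_pow] at h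
    simpa using dvd_add h (dvd_mul_of_dvd_right (dvd_mul_right _ (g.map φ)) (V.map φ))
  have hr₁ : r₁.map φ ≠ 0 := by
    intro h
    obtain ⟨r₂, rfl⟩ := (map_eq_zero_iff_C_dvd hφ).mp h
    exact hr0 (by rw [← mul_assoc, ← C_mul, ← sq, hγ2, C_0, zero_mul])
  calc t * f.natDegree = ((f.map φ) ^ t).natDegree := by
        rw [(hf.map φ).natDegree_pow, hf.natDegree_map]
    _ ≤ (r₁.map φ).natDegree :=
        le_of_not_gt fun h => ((hf.map φ).pow t).not_dvd_of_natDegree_lt hr₁ h hdvd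
    _ ≤ (C γ * r₁).natDegree := natDegree_map_le_natDegree_C_mul hann r₁

end Reduction

lemma isUnit_add_mul_of_pow_eq_mul {S : Type} [CommRing S] {x g b e : S} {N : ℕ}
    (hg : g ^ 2 = 0) (hb : IsUnit b) (h : x ^ N = g * (b + x * e)) : IsUnit (b + x * e) := by
  have hx : IsNilpotent x := ⟨N * 2, by rw [pow_mul, h, mul_pow, hg, zero_mul]⟩
  exact ((Commute.all _ _).isNilpotent_mul_right hx).isUnit_add_left_of_commute hb (.all _ _)

section CodesOfPowers

variable {R K : Type} [CommRing R] [CommRing K] {γ : R} {φ : R →+* K} {f q V : R[X]} {N : ℕ}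

lemma mk_C_mul_pow_mem_span (hfq : f ^ N = q + C γ * V)
    (hV : IsUnit (Ideal.Quotient.mk (Ideal.span {q}) V)) {t ν : ℕ} (hν : ν ≤ N + t) :
    Ideal.Quotient.mk (Ideal.span {q}) (C γ * f ^ t) ∈
      Ideal.span {Ideal.Quotient.mk (Ideal.span {q}) (f ^ ν)} := by
  have h : Ideal.Quotient.mk (Ideal.span {q}) (f ^ (N + t)) =
      Ideal.Quotient.mk (Ideal.span {q}) (C γ * f ^ t) * Ideal.Quotient.mk _ V := by
    rw [← map_mul, Ideal.Quotient.eq, Ideal.mem_span_singleton, pow_add, hfq]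
    exact ⟨f ^ t, by ring⟩
  rw [← mul_one (Ideal.Quotient.mk _ (C γ * f ^ t)), ← hV.mul_val_inv, ← mul_assoc, ← h]
  exact Ideal.mul_mem_right _ _
    (Ideal.mem_span_singleton.mpr (map_dvd _ (pow_dvd_pow f hν)))

lemma span_mk_pow_two_mul_eq_bot (hγ2 : γ ^ 2 = 0) (hfq : f ^ N = q + C γ * V) :
    Ideal.span {Ideal.Quotient.mk (Ideal.span {q}) (f ^ (2 * N))} = ⊥ := by
  rw [Ideal.span_singleton_eq_bot, mul_comm, pow_mul, hfq, Ideal.Quotient.eq_zero_iff_mem,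
    Ideal.mem_span_singleton]
  exact ⟨q + 2 * C γ * V, by rw [add_sq, mul_pow, ← C_pow, hγ2, C_0]; ring⟩

theorem dRT_span_mk_pow [Nontrivial K] (hφ : RingHom.ker φ = Ideal.span {γ}) (hγ : γ ≠ 0)
    (hγ2 : γ ^ 2 = 0) (hann : ∀ a, γ * a = 0 → φ a = 0) (hf : f.Monic)
    (hf0 : 0 < f.natDegree) (hq : q.Monic) (hfq : f ^ N = q + C γ * V)
    (hV : IsUnit (Ideal.Quotient.mk (Ideal.span {q}) V)) {ν : ℕ} (hν : ν < 2 * N) :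
    dRT q (Ideal.span {Ideal.Quotient.mk (Ideal.span {q}) (f ^ ν)}) =
      f.natDegree * (ν - N) + 1 := by
  have : Nontrivial R := nontrivial_of_ne γ 0 hγ
  set t := ν - N
  have hlc : (C γ).leadingCoeff * (f ^ t).leadingCoeff ≠ 0 := by
    rwa [leadingCoeff_C, (hf.pow t).leadingCoeff, mul_one]
  have hg : (C γ * f ^ t).natDegree = f.natDegree * t := by
    rw [natDegree_mul' hlc, natDegree_C, zero_add, hf.natDegree_pow, mul_comm]
  have hg0 : C γ * f ^ t ≠ 0 := fun h =>
    hlc (by rw [← leadingCoeff_mul' hlc, h, leadingCoeff_zero])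
  have hqdeg : q.natDegree = N * f.natDegree := by
    rw [← hq.natDegree_map φ, map_eq_pow_of_pow_eq_add hφ hfq, (hf.map φ).natDegree_pow,
      hf.natDegree_map]
  have hgq : (C γ * f ^ t).degree < q.degree := by
    refine degree_lt_degree ?_
    rw [hg, hqdeg, mul_comm N]
    exact Nat.mul_lt_mul_of_pos_left (by omega) hf0
  rw [← hg]
  refine dRT_eq_natDegree_add_one hq hgq hg0 (mk_C_mul_pow_mem_span hfq hV (by omega)) ?_
  intro r hr hr0 hrI
  rcases Nat.eq_zero_or_pos t with ht | ht
  · simp [ht]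
  obtain ⟨g, hrg⟩ := exists_dvd_sub_of_mk_mem_span hrI
  rw [hg, mul_comm]
  exact mul_natDegree_le_natDegree_of_dvd_sub_pow_mul hφ hγ2 hann hf hq hfq (by omega) hr hr0
    (by rwa [show N + t = ν by omega])

end CodesOfPowers

section Constacyclic

variable {R K : Type} [CommRing R] [CommRing K] {γ : R} {φ : R →+* K}

lemma exists_X_pow_sub_C_pow_eq {p : ℕ} [Fact p.Prime] [CharP K p]
    (hφ : RingHom.ker φ = Ideal.span {γ}) {n : ℕ} (hn : 0 < n) (α β : R) (s : ℕ) :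
    ∃ E : R[X], (X ^ n - C α) ^ p ^ s =
      X ^ (n * p ^ s) - C (α ^ p ^ s + γ * β) + C γ * (C β + (X ^ n - C α) * E) := by
  have hf : (X ^ n - C α).Monic := monic_X_pow_sub_C α hn.ne'
  obtain ⟨E₀, hE₀⟩ :
      X ^ n - C α ∣ (X ^ n - C α) ^ p ^ s - ((X ^ n) ^ p ^ s - C α ^ p ^ s) :=
    dvd_sub (dvd_pow_self _ (pow_ne_zero s (Fact.out : p.Prime).ne_zero))
      (sub_dvd_pow_sub_pow _ _ _)
  have hE₀φ : E₀.map φ = 0 := by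
    rw [← (hf.map φ).mul_right_eq_zero_iff, ← Polynomial.map_mul, ← hE₀]
    simp [sub_pow_char_pow]
  obtain ⟨E, rfl⟩ := (map_eq_zero_iff_C_dvd hφ).mp hE₀φ
  exact ⟨E, by rw [C_add, C_mul, C_pow, pow_mul]; linear_combination hE₀⟩

lemma isUnit_mk_C_add_mul {f q E : R[X]} {β : R} {N : ℕ} (hγ2 : γ ^ 2 = 0) (hβ : IsUnit β)
    (hfq : f ^ N = q + C γ * (C β + f * E)) :
    IsUnit (Ideal.Quotient.mk (Ideal.span {q}) (C β + f * E)) := by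
  rw [map_add, map_mul]
  refine isUnit_add_mul_of_pow_eq_mul (g := Ideal.Quotient.mk _ (C γ)) (N := N) ?_
    ((hβ.map C).map _) ?_
  · rw [← map_pow, ← C_pow, hγ2, C_0, map_zero]
  · rw [← map_pow, hfq, map_add, Ideal.Quotient.mk_singleton_self, zero_add, map_mul, map_add,
      map_mul]

end Constacyclic

lemma charP_quotient_of_card_eq_prime_pow {R : Type} [CommRing R] {I : Ideal R}
    (hI : ∀ a : R, a ∈ I ↔ ¬IsUnit a) {p m : ℕ} (hp : p.Prime)
    (hcard : Nat.card (R ⧸ I) = p ^ m) :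
    CharP (R ⧸ I) p := by
  have : Nontrivial (R ⧸ I) :=
    Ideal.Quotient.nontrivial_iff.mpr fun h => (hI 1).mp (h ▸ Submodule.mem_top) isUnit_one
  have : Finite (R ⧸ I) :=
    Nat.finite_of_card_ne_zero (by rw [hcard]; exact pow_ne_zero _ hp.ne_zero)
  have : Fintype (R ⧸ I) := Fintype.ofFinite _
  have hpm : ((p ^ m : ℕ) : R) ∈ I := by
    rw [← Ideal.Quotient.eq_zero_iff_mem, map_natCast, ← hcard, Nat.card_eq_fintype_card]
    exact Nat.cast_card_eq_zero _
  refine (CharP.charP_iff_prime_eq_zero hp).mpr ?_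
  rw [← map_natCast (Ideal.Quotient.mk I), Ideal.Quotient.eq_zero_iff_mem, hI]
  exact fun hu => (hI _).mp hpm (by rw [Nat.cast_pow]; exact hu.pow m)

theorem stmt6_general {R : Type} [CommRing R]
    (p m s n : ℕ) (hp : p.Prime) (hn : 0 < n)
    (γ : R) (hγ : γ ≠ 0) (hγ2 : γ ^ 2 = 0)
    (hmax : ∀ a : R, a ∈ Ideal.span {γ} ↔ ¬ IsUnit a)
    (hres : Nat.card (R ⧸ Ideal.span {γ}) = p ^ m)
    (α₀ β : R) (hβ : IsUnit β)
    (ν : ℕ) :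
    (ν ≤ p ^ s →
      dRT (X ^ (n * p ^ s) - C (α₀ ^ p ^ s + γ * β))
        (Ideal.span {Ideal.Quotient.mk
          (Ideal.span {(X ^ (n * p ^ s) - C (α₀ ^ p ^ s + γ * β) : R[X])})
          ((X ^ n - C α₀) ^ ν)}) = 1) ∧
    (p ^ s + 1 ≤ ν → ν ≤ 2 * p ^ s - 1 →
      dRT (X ^ (n * p ^ s) - C (α₀ ^ p ^ s + γ * β))
        (Ideal.span {Ideal.Quotient.mk
          (Ideal.span {(X ^ (n * p ^ s) - C (α₀ ^ p ^ s + γ * β) : R[X])})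
          ((X ^ n - C α₀) ^ ν)}) = n * ν - n * p ^ s + 1) ∧
    (ν = 2 * p ^ s →
      dRT (X ^ (n * p ^ s) - C (α₀ ^ p ^ s + γ * β))
        (Ideal.span {Ideal.Quotient.mk
          (Ideal.span {(X ^ (n * p ^ s) - C (α₀ ^ p ^ s + γ * β) : R[X])})
          ((X ^ n - C α₀) ^ ν)}) = 0) := by
  have : Nontrivial R := nontrivial_of_ne γ 0 hγ
  have : Fact p.Prime := ⟨hp⟩
  have := charP_quotient_of_card_eq_prime_pow hmax hp hres
  have := CharP.nontrivial_of_char_ne_one (R := R ⧸ Ideal.span {γ}) hp.ne_one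
  have hann (a : R) (h : γ * a = 0) : Ideal.Quotient.mk (Ideal.span {γ}) a = 0 :=
    Ideal.Quotient.eq_zero_iff_mem.mpr <| (hmax a).mpr fun hu => hγ (hu.mul_left_eq_zero.mp h)
  obtain ⟨E, hE⟩ :=
    exists_X_pow_sub_C_pow_eq (p := p) (Ideal.mk_ker (I := Ideal.span {γ})) hn α₀ β s
  have hN : 0 < p ^ s := pow_pos hp.pos s
  have hdeg : (X ^ n - C α₀).natDegree = n := natDegree_X_pow_sub_C
  have hdRT {ν : ℕ} (hν : ν < 2 * p ^ s) := dRT_span_mk_pow Ideal.mk_ker hγ hγ2 hann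
    (monic_X_pow_sub_C α₀ hn.ne') (by rwa [hdeg])
    (monic_X_pow_sub_C _ (by positivity)) hE
    (isUnit_mk_C_add_mul hγ2 hβ hE) hν
  refine ⟨fun hν => ?_, fun hν₁ hν₂ => ?_, fun hν => ?_⟩
  · rw [hdRT (by omega), Nat.sub_eq_zero_of_le hν, mul_zero]
  · rw [hdRT (by omega), hdeg, Nat.mul_sub]
  · rw [hν, span_mk_pow_two_mul_eq_bot hγ2 hE, dRT_bot]

/-- RT distances of the `(α₀^{p^s} + γβ)`-constacyclic codes
`⟨(x^n − α₀)^ν⟩` of length `np^s` over a finite chain ring with nilpotency index 2. -/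
theorem stmt6 {R : Type} [CommRing R] [Finite R]
    (p m s n : ℕ) (hp : p.Prime) (hm : 0 < m) (hs : 0 < s) (hn : 0 < n)
    (hnp : Nat.gcd n p = 1)
    (γ : R) (hγ : γ ≠ 0) (hγ2 : γ ^ 2 = 0)
    (hmax : ∀ a : R, a ∈ Ideal.span {γ} ↔ ¬ IsUnit a)
    (hres : Nat.card (R ⧸ Ideal.span {γ}) = p ^ m)
    (α₀ β : R) (hα₀ : IsUnit α₀) (hβ : IsUnit β)
    (hirr : Irreducible ((X ^ n - C α₀ : R[X]).map (Ideal.Quotient.mk (Ideal.span {γ}))))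
    (ν : ℕ) (hν : ν ≤ 2 * p ^ s) :
    (ν ≤ p ^ s →
      dRT (X ^ (n * p ^ s) - C (α₀ ^ p ^ s + γ * β))
        (Ideal.span {Ideal.Quotient.mk
          (Ideal.span {(X ^ (n * p ^ s) - C (α₀ ^ p ^ s + γ * β) : R[X])})
          ((X ^ n - C α₀) ^ ν)}) = 1) ∧
    (p ^ s + 1 ≤ ν → ν ≤ 2 * p ^ s - 1 →
      dRT (X ^ (n * p ^ s) - C (α₀ ^ p ^ s + γ * β))
        (Ideal.span {Ideal.Quotient.mk
          (Ideal.span {(X ^ (n * p ^ s) - C (α₀ ^ p ^ s + γ * β) : R[X])})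
          ((X ^ n - C α₀) ^ ν)}) = n * ν - n * p ^ s + 1) ∧
    (ν = 2 * p ^ s →
      dRT (X ^ (n * p ^ s) - C (α₀ ^ p ^ s + γ * β))
        (Ideal.span {Ideal.Quotient.mk
          (Ideal.span {(X ^ (n * p ^ s) - C (α₀ ^ p ^ s + γ * β) : R[X])})
          ((X ^ n - C α₀) ^ ν)}) = 0) :=
  stmt6_general p m s n hp hn γ hγ hγ2 hmax hres α₀ β hβ ν
end

section
/- Let α₀ be a unit of R such that x^n − α₀ is basic irreducible over R, let α = α₀^{p^s}, write f = x^n − α₀, and let K = R[x]/⟨x^{np^s} − α⟩. Then: (a) for 0 ≤ τ < p^s, the ideal ⟨γ f^τ⟩ of K has exactly p^{mn(p^s − τ)} elements; (b) if I = ⟨f^ω + γ f^t G, γ f^μ⟩ is an ideal of K with 0 < ω < p^s, G either 0 or a unit of K, 0 ≤ t < μ when G ≠ 0, and 0 ≤ μ < κ, where κ is the least nonnegative integer such that γ f^κ ∈ ⟨f^ω + γ f^t G⟩, then I has exactly p^{mn(2p^s − μ − ω)} elements. -/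
/-!
Write `k = R/(γ)` and `K = R[x]/(P)` with `P = x^{np^s} - α₀^{p^s}`. Modulo `γ` the polynomial `P`
becomes `f̄^{p^s}` (Frobenius). Because `P` is monic and the annihilator of `γ` is `(γ)`,
multiplication by `γ` identifies `k[x]/(f̄^{p^s}) = K/γK` with `γK`; hence
`|⟨γ f^τ⟩| = |⟨f̄^τ⟩| = |k|^{n(p^s-τ)}`, which is (a).

For (b), reduce `I` modulo `γ`: its image is `⟨f̄^ω⟩`, of size `|k|^{n(p^s-ω)}`, and its kernel
`I ∩ γK` is `⟨γ f^μ⟩`. The one nontrivial inclusion is `f^{p^s-ω}(f^ω + γ f^t G) ∈ ⟨γ f^μ⟩`. The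
left side lies in `γK` since `f^{p^s} ∈ γK`. Every element of `γK` has the form `γ f^j u` with `u`
a unit, because `f̄` is irreducible and a polynomial prime to `f̄` is a unit of `K`. Finally
`γ f^j ∈ ⟨f^ω + γ f^t G⟩` forces `j ≥ κ > μ`.
-/

open Polynomial

theorem Ideal.isMaximal_of_forall_mem_iff_not_isUnit {R : Type*} [CommRing R] {I : Ideal R}
    (h : ∀ a, a ∈ I ↔ ¬IsUnit a) : I.IsMaximal := by
  rw [Ideal.isMaximal_iff]
  refine ⟨fun h1 => (h 1).1 h1 isUnit_one, fun J x _ hxI hxJ => ?_⟩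
  have hx : IsUnit x := not_not.1 (mt (h x).2 hxI)
  exact Ideal.eq_top_iff_one _ |>.1 (J.eq_top_of_isUnit_mem hxJ hx)

section Cardinality

variable {S A B : Type*} [CommRing S] [CommRing A] [CommRing B]

theorem card_quotient_span_monic [Finite S] {g : S[X]} (hg : g.Monic) :
    Nat.card (S[X] ⧸ Ideal.span {g}) = Nat.card S ^ g.natDegree := by
  have := Fintype.ofFinite S
  let pb := AdjoinRoot.powerBasis' hg
  have e : (S[X] ⧸ Ideal.span {g}) ≃ₗ[S] (Fin pb.dim → S) := pb.basis.equivFun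
  rw [Nat.card_congr e.toEquiv, Nat.card_fun]
  simp [pb]

theorem card_span_singleton_map_eq_card_quotient {φ : S →+* A} (hφ : Function.Surjective φ)
    (a : S) : Nat.card (Ideal.span {φ a}) =
      Nat.card (S ⧸ (φ.toAddMonoidHom.comp (AddMonoidHom.mulRight a)).ker) := by
  rw [Nat.card_congr (QuotientAddGroup.quotientKerEquivRange _).toEquiv]
  refine Nat.card_congr (Equiv.subtypeEquivRight fun x => ?_)
  simp [Ideal.mem_span_singleton', hφ.exists]

theorem card_span_singleton_eq_of_mul_eq_zero_iff {φ : S →+* A} {ψ : S →+* B}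
    (hφ : Function.Surjective φ) (hψ : Function.Surjective ψ) {a b : S}
    (h : ∀ g, φ (g * a) = 0 ↔ ψ (g * b) = 0) :
    Nat.card (Ideal.span {φ a}) = Nat.card (Ideal.span {ψ b}) := by
  have hker : (φ.toAddMonoidHom.comp (AddMonoidHom.mulRight a)).ker =
      (ψ.toAddMonoidHom.comp (AddMonoidHom.mulRight b)).ker := AddSubgroup.ext h
  rw [card_span_singleton_map_eq_card_quotient hφ, card_span_singleton_map_eq_card_quotient hψ,
    hker]

theorem card_eq_card_inf_ker_mul_card_map {χ : A →+* B} (hχ : Function.Surjective χ)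
    (I : Ideal A) :
    Nat.card I = Nat.card (I ⊓ RingHom.ker χ : Ideal A) * Nat.card (I.map χ) := by
  let φ : I.toAddSubgroup →+ B := χ.toAddMonoidHom.comp I.toAddSubgroup.subtype
  have hker : Nat.card φ.ker = Nat.card (I ⊓ RingHom.ker χ : Ideal A) :=
    Nat.card_congr
      { toFun x := ⟨x.1.1, x.1.2, x.2⟩
        invFun x := ⟨⟨x.1, x.2.1⟩, x.2.2⟩ }
  have hrange : Nat.card φ.range = Nat.card (I.map χ) :=
    Nat.card_congr <| Equiv.subtypeEquivRight fun y => by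
      simp [Ideal.mem_map_iff_of_surjective χ hχ, φ]
  rw [← hker, ← hrange, ← Nat.card_congr (QuotientAddGroup.quotientKerEquivRange φ).toEquiv,
    mul_comm, ← AddSubgroup.card_eq_card_quotient_mul_card_addSubgroup]
  rfl

end Cardinality

section ChainRing

variable {R : Type*} [CommRing R] {γ : R}

-- `singleton γ` rather than `{γ}`, which a notation cannot parse unambiguously.
local notation "𝔪" => Ideal.span (singleton γ)

theorem map_mk_eq_zero_iff {u : R[X]} :
    u.map (Ideal.Quotient.mk 𝔪) = 0 ↔ u ∈ Ideal.span {C γ} := by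
  rw [← Set.image_singleton, ← Ideal.map_span, Ideal.mem_map_C_iff]
  simp [Polynomial.ext_iff, coeff_map, Ideal.Quotient.eq_zero_iff_mem]

theorem exists_eq_add_C_mul_of_map_eq {u v : R[X]}
    (h : u.map (Ideal.Quotient.mk 𝔪) = v.map (Ideal.Quotient.mk 𝔪)) :
    ∃ e, u = v + C γ * e := by
  rw [← sub_eq_zero, ← Polynomial.map_sub, map_mk_eq_zero_iff,
    Ideal.mem_span_singleton'] at h
  obtain ⟨e, he⟩ := h
  exact ⟨e, by linear_combination -he⟩

theorem mem_span_C_pair_iff_map_dvd {W g : R[X]} :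
    g ∈ Ideal.span {C γ, W} ↔ W.map (Ideal.Quotient.mk 𝔪) ∣ g.map (Ideal.Quotient.mk 𝔪) := by
  rw [Ideal.mem_span_pair]
  constructor
  · rintro ⟨a, b, rfl⟩
    have hγ : (Ideal.Quotient.mk 𝔪) γ = 0 :=
      Ideal.Quotient.eq_zero_iff_mem.2 (Ideal.mem_span_singleton_self γ)
    exact ⟨b.map (Ideal.Quotient.mk 𝔪), by simp [hγ, mul_comm]⟩
  · rintro ⟨c, hc⟩
    obtain ⟨c, rfl⟩ := map_surjective _ Ideal.Quotient.mk_surjective c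
    rw [← Polynomial.map_mul] at hc
    obtain ⟨e, he⟩ := exists_eq_add_C_mul_of_map_eq hc
    exact ⟨e, c, by rw [he]; ring⟩

theorem card_quotient_span_C_pair [Finite R] {W : R[X]}
    (hW : (W.map (Ideal.Quotient.mk 𝔪)).Monic) :
    Nat.card (R[X] ⧸ Ideal.span {C γ, W}) =
      Nat.card (R ⧸ 𝔪) ^ (W.map (Ideal.Quotient.mk 𝔪)).natDegree := by
  have : Finite (R ⧸ 𝔪) := Quotient.finite _
  let ψ := (Ideal.Quotient.mk (Ideal.span {W.map (Ideal.Quotient.mk 𝔪)})).comp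
    (mapRingHom (Ideal.Quotient.mk 𝔪))
  have hψ : Function.Surjective ψ :=
    Ideal.Quotient.mk_surjective.comp (map_surjective _ Ideal.Quotient.mk_surjective)
  have hker : RingHom.ker ψ = Ideal.span {C γ, W} := by
    ext g
    rw [RingHom.mem_ker, mem_span_C_pair_iff_map_dvd, ← Ideal.mem_span_singleton]
    exact Ideal.Quotient.eq_zero_iff_mem
  rw [← hker, Nat.card_congr (RingHom.quotientKerEquivOfSurjective hψ).toEquiv,
    card_quotient_span_monic hW]

theorem mul_pow_mem_span_C_pair_iff {f g : R[X]} (hf : (f.map (Ideal.Quotient.mk 𝔪)).Monic)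
    {i N : ℕ} (hi : i ≤ N) :
    g * f ^ i ∈ Ideal.span {C γ, f ^ N} ↔ g ∈ Ideal.span {C γ, f ^ (N - i)} := by
  simp only [mem_span_C_pair_iff_map_dvd, Polynomial.map_mul, Polynomial.map_pow]
  rw [← Nat.add_sub_cancel' hi, pow_add, Nat.add_sub_cancel_left, mul_comm (g.map _)]
  exact (hf.pow i).isRegular.left.dvd_cancel_left

theorem card_span_mk_pow [Finite R] {f : R[X]} (hf : (f.map (Ideal.Quotient.mk 𝔪)).Monic)
    {i N : ℕ} (hi : i ≤ N) :
    Nat.card (Ideal.span {Ideal.Quotient.mk (Ideal.span {C γ, f ^ N}) (f ^ i)}) =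
      Nat.card (R ⧸ 𝔪) ^ ((f.map (Ideal.Quotient.mk 𝔪)).natDegree * (N - i)) := by
  have h := card_span_singleton_eq_of_mul_eq_zero_iff (a := f ^ i) (b := 1)
    (Ideal.Quotient.mk_surjective (I := Ideal.span {C γ, f ^ N}))
    (Ideal.Quotient.mk_surjective (I := Ideal.span {C γ, f ^ (N - i)}))
    fun g => by
      rw [mul_one, Ideal.Quotient.eq_zero_iff_mem, Ideal.Quotient.eq_zero_iff_mem]
      exact mul_pow_mem_span_C_pair_iff hf hi
  rw [h, map_one, Ideal.span_singleton_one, Nat.card_congr Submodule.topEquiv.toEquiv,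
    card_quotient_span_C_pair (by rw [Polynomial.map_pow]; exact hf.pow _), Polynomial.map_pow,
    hf.natDegree_pow, mul_comm]

theorem mem_span_C_of_C_mul_eq_zero (hann : ∀ r, γ * r = 0 → r ∈ 𝔪) {v : R[X]}
    (hv : C γ * v = 0) : v ∈ Ideal.span {C γ} := by
  rw [← map_mk_eq_zero_iff]
  ext i
  rw [coeff_map, coeff_zero, Ideal.Quotient.eq_zero_iff_mem]
  exact hann _ (by rw [← coeff_C_mul, hv, coeff_zero])

theorem C_mul_mem_span_iff (hγ2 : γ ^ 2 = 0) (hann : ∀ r, γ * r = 0 → r ∈ 𝔪) {P : R[X]}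
    (hP : P.Monic) (u : R[X]) : C γ * u ∈ Ideal.span {P} ↔ u ∈ Ideal.span {C γ, P} := by
  rw [Ideal.mem_span_singleton', Ideal.mem_span_pair]
  constructor
  · rintro ⟨c, hc⟩
    have hc0 : c.map (Ideal.Quotient.mk 𝔪) = 0 := by
      rw [← (hP.map _).mul_left_eq_zero_iff, ← Polynomial.map_mul, hc, map_mk_eq_zero_iff]
      exact Ideal.mul_mem_right _ _ (Ideal.mem_span_singleton_self _)
    obtain ⟨d, rfl⟩ := Ideal.mem_span_singleton'.1 (map_mk_eq_zero_iff.1 hc0)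
    obtain ⟨e, he⟩ := Ideal.mem_span_singleton'.1 (mem_span_C_of_C_mul_eq_zero hann
      (v := u - d * P) (by linear_combination -hc))
    exact ⟨e, d, by linear_combination he⟩
  · rintro ⟨a, b, rfl⟩
    have hC : C γ ^ 2 = 0 := by rw [← C_pow, hγ2, C_0]
    exact ⟨C γ * b, by linear_combination (-a) * hC⟩

theorem isUnit_of_isCoprime_map {S : Type*} [CommRing S] (φ : R[X] →+* S)
    (hγ : IsNilpotent (φ (C γ))) {P v : R[X]} (hP : φ P = 0)
    (hcop : IsCoprime (v.map (Ideal.Quotient.mk 𝔪)) (P.map (Ideal.Quotient.mk 𝔪))) :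
    IsUnit (φ v) := by
  obtain ⟨a, b, hab⟩ := hcop
  obtain ⟨a, rfl⟩ := map_surjective _ Ideal.Quotient.mk_surjective a
  obtain ⟨b, rfl⟩ := map_surjective _ Ideal.Quotient.mk_surjective b
  obtain ⟨e, he⟩ := exists_eq_add_C_mul_of_map_eq (γ := γ) (u := a * v + b * P) (v := 1)
    (by simpa using hab)
  have hav : φ a * φ v = 1 + φ (C γ) * φ e := by simpa [hP] using congrArg φ he
  exact isUnit_of_mul_isUnit_right
    (hav ▸ ((Commute.all _ _).isNilpotent_mul_right hγ).isUnit_one_add)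

variable {P f : R[X]} {N : ℕ}

local notation "π" => Ideal.Quotient.mk (Ideal.span (singleton P))

theorem exists_C_mul_eq_C_mul_pow_mul_unit [(𝔪).IsMaximal] (hγ2 : γ ^ 2 = 0)
    (hPf : P.map (Ideal.Quotient.mk 𝔪) = f.map (Ideal.Quotient.mk 𝔪) ^ N)
    (hirr : Irreducible (f.map (Ideal.Quotient.mk 𝔪))) (z : R[X]) :
    ∃ (j : ℕ) (u : (R[X] ⧸ Ideal.span {P})ˣ), π (C γ * z) = π (C γ * f ^ j) * u := by
  let _ : Field (R ⧸ 𝔪) := Ideal.Quotient.field 𝔪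
  have hC : C γ * C γ = 0 := by rw [← C_mul, ← sq, hγ2, C_0]
  have hπP : π P = 0 := Ideal.Quotient.eq_zero_iff_mem.2 (Ideal.mem_span_singleton_self P)
  by_cases hz : z.map (Ideal.Quotient.mk 𝔪) = 0
  · obtain ⟨d, rfl⟩ := Ideal.mem_span_singleton'.1 (map_mk_eq_zero_iff.1 hz)
    obtain ⟨e, he⟩ := exists_eq_add_C_mul_of_map_eq (u := f ^ N) (v := P)
      (by rw [Polynomial.map_pow, hPf])
    refine ⟨N, 1, ?_⟩
    rw [Units.val_one, mul_one, he, show C γ * (d * C γ) = 0 by linear_combination d * hC,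
      show C γ * (P + C γ * e) = C γ * P by linear_combination e * hC, map_mul, hπP, mul_zero,
      map_zero]
  · obtain ⟨j, v, hfv, hzv⟩ := WfDvdMonoid.max_power_factor hz hirr
    obtain ⟨v, rfl⟩ := map_surjective _ Ideal.Quotient.mk_surjective v
    obtain ⟨e, he⟩ := exists_eq_add_C_mul_of_map_eq (u := z) (v := f ^ j * v)
      (by rw [hzv, Polynomial.map_mul, Polynomial.map_pow])
    have hv : IsUnit (π v) := by
      refine isUnit_of_isCoprime_map π ⟨2, by rw [sq, ← map_mul, hC, map_zero]⟩ hπP ?_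
      rw [hPf]
      exact ((hirr.coprime_iff_not_dvd.2 hfv).pow_left).symm
    refine ⟨j, hv.unit, ?_⟩
    rw [IsUnit.unit_spec, ← map_mul, he]
    congr 1
    linear_combination e * hC

theorem span_C_pair_eq_of_map_eq
    (hPf : P.map (Ideal.Quotient.mk 𝔪) = f.map (Ideal.Quotient.mk 𝔪) ^ N) :
    Ideal.span {C γ, P} = Ideal.span {C γ, f ^ N} := by
  ext g
  rw [mem_span_C_pair_iff_map_dvd, mem_span_C_pair_iff_map_dvd, hPf, Polynomial.map_pow]

theorem card_span_C_mul_pow [Finite R] (hγ2 : γ ^ 2 = 0) (hann : ∀ r, γ * r = 0 → r ∈ 𝔪)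
    {τ : ℕ} (hP : P.Monic) (hf : (f.map (Ideal.Quotient.mk 𝔪)).Monic)
    (hPf : P.map (Ideal.Quotient.mk 𝔪) = f.map (Ideal.Quotient.mk 𝔪) ^ N) (hτ : τ ≤ N) :
    Nat.card (Ideal.span {π (C γ * f ^ τ)}) =
      Nat.card (R ⧸ 𝔪) ^ ((f.map (Ideal.Quotient.mk 𝔪)).natDegree * (N - τ)) := by
  rw [← card_span_mk_pow hf hτ]
  refine card_span_singleton_eq_of_mul_eq_zero_iff Ideal.Quotient.mk_surjective
    Ideal.Quotient.mk_surjective fun g => ?_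
  rw [Ideal.Quotient.eq_zero_iff_mem, Ideal.Quotient.eq_zero_iff_mem, mul_left_comm,
    C_mul_mem_span_iff hγ2 hann hP, span_C_pair_eq_of_map_eq hPf]

theorem mk_C_mul_mul_add (hγ2 : γ ^ 2 = 0) (a b : R[X]) (G : R[X] ⧸ Ideal.span {P}) :
    π (C γ) * (π a + π (C γ * b) * G) = π (C γ * a) := by
  have hC : C γ * (C γ * b) = 0 := by rw [← mul_assoc, ← C_mul, ← sq, hγ2, C_0, zero_mul]
  rw [mul_add, ← mul_assoc, ← map_mul, ← map_mul, hC, map_zero, zero_mul, add_zero]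

section IdealPair

variable {ω t μ κ : ℕ} {G : R[X] ⧸ Ideal.span {P}}

theorem le_of_isLeast_C_mul_pow_mem_span (hγ2 : γ ^ 2 = 0)
    (hκ : IsLeast {j | π (C γ) * π f ^ j ∈ Ideal.span {π (f ^ ω) + π (C γ * f ^ t) * G}} κ) :
    κ ≤ ω := by
  refine hκ.2 ?_
  show π (C γ) * π f ^ ω ∈ Ideal.span {π (f ^ ω) + π (C γ * f ^ t) * G}
  rw [← map_pow, ← map_mul, ← mk_C_mul_mul_add hγ2 (f ^ ω) (f ^ t) G]
  exact Ideal.mul_mem_left _ _ (Ideal.mem_span_singleton_self _)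

theorem pow_sub_mul_mem_span_C_mul_pow [(𝔪).IsMaximal] (hγ2 : γ ^ 2 = 0)
    (hPf : P.map (Ideal.Quotient.mk 𝔪) = f.map (Ideal.Quotient.mk 𝔪) ^ N)
    (hirr : Irreducible (f.map (Ideal.Quotient.mk 𝔪))) (hωN : ω ≤ N)
    (hκ : IsLeast {j | π (C γ) * π f ^ j ∈ Ideal.span {π (f ^ ω) + π (C γ * f ^ t) * G}} κ)
    (hμκ : μ < κ) :
    π (f ^ (N - ω)) * (π (f ^ ω) + π (C γ * f ^ t) * G) ∈ Ideal.span {π (C γ * f ^ μ)} := by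
  obtain ⟨G, rfl⟩ := Ideal.Quotient.mk_surjective G
  obtain ⟨h, hh⟩ := exists_eq_add_C_mul_of_map_eq (u := f ^ N) (v := P)
    (by rw [Polynomial.map_pow, hPf])
  obtain ⟨j, u, hu⟩ :=
    exists_C_mul_eq_C_mul_pow_mul_unit hγ2 hPf hirr (h + f ^ (N - ω + t) * G)
  have hpow : f ^ (N - ω) * f ^ ω = f ^ N := by rw [← pow_add, Nat.sub_add_cancel hωN]
  -- `f ^ N ≡ γ h` modulo `P`, so the left-hand side is a multiple of `γ`.
  have hγ : π (f ^ (N - ω)) * (π (f ^ ω) + π (C γ * f ^ t) * π G) = π (C γ * f ^ j) * u := by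
    rw [← hu, ← map_mul, ← map_add, ← map_mul, Ideal.Quotient.eq]
    exact Ideal.mem_span_singleton'.2 ⟨1, by
      linear_combination -hh - hpow + C γ * G * pow_add f (N - ω) t⟩
  have hj : π (C γ) * π f ^ j ∈ Ideal.span {π (f ^ ω) + π (C γ * f ^ t) * π G} :=
    Ideal.mem_span_singleton'.2 ⟨π (f ^ (N - ω)) * ↑u⁻¹, by
      rw [mul_right_comm, hγ, ← map_pow, ← map_mul, Units.mul_inv_cancel_right]⟩
  have hμj : μ ≤ j := (hμκ.trans_le (hκ.2 hj)).le
  rw [hγ]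
  exact Ideal.mul_mem_right _ _
    (Ideal.mem_span_singleton.2 (map_dvd π (mul_dvd_mul_left _ (pow_dvd_pow f hμj))))

theorem mul_mem_span_C_mul_pow [(𝔪).IsMaximal] (hγ2 : γ ^ 2 = 0)
    (hPf : P.map (Ideal.Quotient.mk 𝔪) = f.map (Ideal.Quotient.mk 𝔪) ^ N)
    (hirr : Irreducible (f.map (Ideal.Quotient.mk 𝔪))) (hωN : ω ≤ N)
    (hκ : IsLeast {j | π (C γ) * π f ^ j ∈ Ideal.span {π (f ^ ω) + π (C γ * f ^ t) * G}} κ)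
    (hμκ : μ < κ) {a : R[X]} (ha : a ∈ Ideal.span {C γ, f ^ (N - ω)}) :
    π a * (π (f ^ ω) + π (C γ * f ^ t) * G) ∈ Ideal.span {π (C γ * f ^ μ)} := by
  obtain ⟨c, d, rfl⟩ := Ideal.mem_span_pair.1 ha
  have hμω : μ ≤ ω := (hμκ.trans_le (le_of_isLeast_C_mul_pow_mem_span hγ2 hκ)).le
  rw [map_add, map_mul π c, map_mul π d, add_mul, mul_assoc, mul_assoc (π d),
    mk_C_mul_mul_add hγ2]
  refine add_mem (Ideal.mul_mem_left _ _ (Ideal.mem_span_singleton.2 (map_dvd π ?_)))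
    (Ideal.mul_mem_left _ _ (pow_sub_mul_mem_span_C_mul_pow hγ2 hPf hirr hωN hκ hμκ))
  exact mul_dvd_mul_left _ (pow_dvd_pow f hμω)

theorem card_span_pair [Finite R] [(𝔪).IsMaximal] (hγ2 : γ ^ 2 = 0)
    (hann : ∀ r, γ * r = 0 → r ∈ 𝔪) (hP : P.Monic) (hf : (f.map (Ideal.Quotient.mk 𝔪)).Monic)
    (hPf : P.map (Ideal.Quotient.mk 𝔪) = f.map (Ideal.Quotient.mk 𝔪) ^ N)
    (hirr : Irreducible (f.map (Ideal.Quotient.mk 𝔪))) (hωN : ω ≤ N)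
    (hκ : IsLeast {j | π (C γ) * π f ^ j ∈ Ideal.span {π (f ^ ω) + π (C γ * f ^ t) * G}} κ)
    (hμκ : μ < κ) :
    Nat.card (Ideal.span {π (f ^ ω) + π (C γ * f ^ t) * G, π (C γ * f ^ μ)}) =
      Nat.card (R ⧸ 𝔪) ^ ((f.map (Ideal.Quotient.mk 𝔪)).natDegree * (2 * N - μ - ω)) := by
  have hle : Ideal.span {P} ≤ Ideal.span {C γ, f ^ N} := by
    rw [← span_C_pair_eq_of_map_eq hPf]
    exact Ideal.span_mono (Set.subset_insert _ _)
  set χ := Ideal.Quotient.factor hle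
  have hχ (g : R[X]) : χ (π g) = Ideal.Quotient.mk _ g := Ideal.Quotient.factor_mk hle g
  have hχγ (g : R[X]) : χ (π (C γ * g)) = 0 := by
    rw [hχ, Ideal.Quotient.eq_zero_iff_mem]
    exact Ideal.mul_mem_right _ _ (Ideal.subset_span (Set.mem_insert _ _))
  have hχg : χ (π (f ^ ω) + π (C γ * f ^ t) * G) = Ideal.Quotient.mk _ (f ^ ω) := by
    rw [map_add, map_mul, hχγ, zero_mul, add_zero, hχ]
  have hinf : Ideal.span {π (f ^ ω) + π (C γ * f ^ t) * G, π (C γ * f ^ μ)} ⊓ RingHom.ker χ =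
      Ideal.span {π (C γ * f ^ μ)} := by
    refine le_antisymm ?_ (le_inf (Ideal.span_mono (Set.subset_insert _ _)) ?_)
    · rintro x ⟨hx, hχx⟩
      obtain ⟨a, b, rfl⟩ := Ideal.mem_span_pair.1 hx
      obtain ⟨a, rfl⟩ := Ideal.Quotient.mk_surjective a
      rw [SetLike.mem_coe, RingHom.mem_ker, map_add, map_mul χ, map_mul χ b, hχg, hχγ, mul_zero,
        add_zero, hχ, ← map_mul, Ideal.Quotient.eq_zero_iff_mem,
        mul_pow_mem_span_C_pair_iff hf hωN] at hχx
      exact add_mem (mul_mem_span_C_mul_pow hγ2 hPf hirr hωN hκ hμκ hχx)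
        (Ideal.mul_mem_left _ _ (Ideal.mem_span_singleton_self _))
    · rw [Ideal.span_le, Set.singleton_subset_iff, SetLike.mem_coe, RingHom.mem_ker, hχγ]
  have hmap : (Ideal.span {π (f ^ ω) + π (C γ * f ^ t) * G, π (C γ * f ^ μ)}).map χ =
      Ideal.span {Ideal.Quotient.mk _ (f ^ ω)} := by
    rw [Ideal.map_span, Set.image_pair, hχg, hχγ, Set.pair_comm (Ideal.Quotient.mk _ _),
      Ideal.span_insert_zero]
  have hμω : μ ≤ ω := (hμκ.trans_le (le_of_isLeast_C_mul_pow_mem_span hγ2 hκ)).le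
  rw [card_eq_card_inf_ker_mul_card_map (Ideal.Quotient.factor_surjective hle), hinf, hmap,
    card_span_C_mul_pow hγ2 hann hP hf hPf (hμω.trans hωN), card_span_mk_pow hf hωN, ← pow_add,
    ← mul_add]
  congr 2
  omega

end IdealPair

end ChainRing

theorem stmt10_general {R : Type} [CommRing R] [Finite R]
    (p m s n : ℕ) (hp : p.Prime) (hn : 0 < n)
    (γ : R) (hγ : γ ≠ 0) (hγ2 : γ ^ 2 = 0)
    (hmax : ∀ a : R, a ∈ Ideal.span {γ} ↔ ¬ IsUnit a)
    (hres : Nat.card (R ⧸ Ideal.span {γ}) = p ^ m)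
    (α₀ : R)
    (hirr : Irreducible ((X ^ n - C α₀ : R[X]).map (Ideal.Quotient.mk (Ideal.span {γ})))) :
    (∀ τ, τ < p ^ s →
      Nat.card ↥(Ideal.span {Ideal.Quotient.mk
          (Ideal.span {(X ^ (n * p ^ s) - C (α₀ ^ p ^ s) : R[X])})
          (C γ * (X ^ n - C α₀) ^ τ)}) = p ^ (m * n * (p ^ s - τ))) ∧
    (∀ ω t μ : ℕ, ∀ G : R[X] ⧸ Ideal.span {(X ^ (n * p ^ s) - C (α₀ ^ p ^ s) : R[X])},
      0 < ω → ω < p ^ s → (G = 0 ∨ IsUnit G) → (G ≠ 0 → t < μ) →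
      ∀ κ : ℕ,
        IsLeast {k : ℕ |
          Ideal.Quotient.mk (Ideal.span {(X ^ (n * p ^ s) - C (α₀ ^ p ^ s) : R[X])}) (C γ) *
            (Ideal.Quotient.mk (Ideal.span {(X ^ (n * p ^ s) - C (α₀ ^ p ^ s) : R[X])})
              (X ^ n - C α₀)) ^ k ∈
          Ideal.span {Ideal.Quotient.mk
              (Ideal.span {(X ^ (n * p ^ s) - C (α₀ ^ p ^ s) : R[X])})
              ((X ^ n - C α₀) ^ ω) +
            Ideal.Quotient.mk (Ideal.span {(X ^ (n * p ^ s) - C (α₀ ^ p ^ s) : R[X])})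
              (C γ * (X ^ n - C α₀) ^ t) * G}} κ →
        μ < κ →
        Nat.card ↥(Ideal.span {Ideal.Quotient.mk
              (Ideal.span {(X ^ (n * p ^ s) - C (α₀ ^ p ^ s) : R[X])})
              ((X ^ n - C α₀) ^ ω) +
            Ideal.Quotient.mk (Ideal.span {(X ^ (n * p ^ s) - C (α₀ ^ p ^ s) : R[X])})
              (C γ * (X ^ n - C α₀) ^ t) * G,
            Ideal.Quotient.mk (Ideal.span {(X ^ (n * p ^ s) - C (α₀ ^ p ^ s) : R[X])})
              (C γ * (X ^ n - C α₀) ^ μ)}) = p ^ (m * n * (2 * p ^ s - μ - ω))) := by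
  have hann (r : R) (hr : γ * r = 0) : r ∈ Ideal.span {γ} :=
    (hmax r).2 fun hu => hγ (by rw [← mul_one γ, ← hu.mul_val_inv, ← mul_assoc, hr, zero_mul])
  have := Ideal.isMaximal_of_forall_mem_iff_not_isUnit hmax
  have := Fact.mk hp
  have : Fintype (R ⧸ Ideal.span {γ}) := @Fintype.ofFinite _ (Quotient.finite _)
  have : CharP (R ⧸ Ideal.span {γ}) p :=
    charP_of_card_eq_prime_pow (by rw [← Nat.card_eq_fintype_card, hres])
  have hf : ((X ^ n - C α₀ : R[X]).map (Ideal.Quotient.mk (Ideal.span {γ}))).Monic := by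
    simpa using monic_X_pow_sub_C _ hn.ne'
  have hdeg : ((X ^ n - C α₀ : R[X]).map (Ideal.Quotient.mk (Ideal.span {γ}))).natDegree = n := by
    simp
  have hP : (X ^ (n * p ^ s) - C (α₀ ^ p ^ s) : R[X]).Monic :=
    monic_X_pow_sub_C _ (Nat.mul_pos hn (pow_pos hp.pos s)).ne'
  have hPf : (X ^ (n * p ^ s) - C (α₀ ^ p ^ s) : R[X]).map (Ideal.Quotient.mk (Ideal.span {γ})) =
      (X ^ n - C α₀ : R[X]).map (Ideal.Quotient.mk (Ideal.span {γ})) ^ p ^ s := by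
    simp [sub_pow_char_pow, ← pow_mul]
  refine ⟨fun τ hτ => ?_, fun ω t μ G _ hω _ _ κ hκ hμκ => ?_⟩
  · rw [card_span_C_mul_pow hγ2 hann hP hf hPf hτ.le, hres, hdeg, ← pow_mul, mul_assoc]
  · rw [card_span_pair hγ2 hann hP hf hPf hirr hω.le hκ hμκ, hres, hdeg, ← pow_mul, mul_assoc]

/-- cardinalities of the Type II and Type IV ideals of
`K = R[x]/⟨x^{np^s} − α₀^{p^s}⟩`, with `f = x^n − α₀` basic irreducible. -/
theorem stmt10 {R : Type} [CommRing R] [Finite R]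
    (p m s n : ℕ) (hp : p.Prime) (hm : 0 < m) (hs : 0 < s) (hn : 0 < n)
    (hnp : Nat.gcd n p = 1)
    (γ : R) (hγ : γ ≠ 0) (hγ2 : γ ^ 2 = 0)
    (hmax : ∀ a : R, a ∈ Ideal.span {γ} ↔ ¬ IsUnit a)
    (hres : Nat.card (R ⧸ Ideal.span {γ}) = p ^ m)
    (α₀ : R) (hα₀ : IsUnit α₀)
    (hirr : Irreducible ((X ^ n - C α₀ : R[X]).map (Ideal.Quotient.mk (Ideal.span {γ})))) :
    (∀ τ, τ < p ^ s →
      Nat.card ↥(Ideal.span {Ideal.Quotient.mk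
          (Ideal.span {(X ^ (n * p ^ s) - C (α₀ ^ p ^ s) : R[X])})
          (C γ * (X ^ n - C α₀) ^ τ)}) = p ^ (m * n * (p ^ s - τ))) ∧
    (∀ ω t μ : ℕ, ∀ G : R[X] ⧸ Ideal.span {(X ^ (n * p ^ s) - C (α₀ ^ p ^ s) : R[X])},
      0 < ω → ω < p ^ s → (G = 0 ∨ IsUnit G) → (G ≠ 0 → t < μ) →
      ∀ κ : ℕ,
        IsLeast {k : ℕ |
          Ideal.Quotient.mk (Ideal.span {(X ^ (n * p ^ s) - C (α₀ ^ p ^ s) : R[X])}) (C γ) *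
            (Ideal.Quotient.mk (Ideal.span {(X ^ (n * p ^ s) - C (α₀ ^ p ^ s) : R[X])})
              (X ^ n - C α₀)) ^ k ∈
          Ideal.span {Ideal.Quotient.mk
              (Ideal.span {(X ^ (n * p ^ s) - C (α₀ ^ p ^ s) : R[X])})
              ((X ^ n - C α₀) ^ ω) +
            Ideal.Quotient.mk (Ideal.span {(X ^ (n * p ^ s) - C (α₀ ^ p ^ s) : R[X])})
              (C γ * (X ^ n - C α₀) ^ t) * G}} κ →
        μ < κ →
        Nat.card ↥(Ideal.span {Ideal.Quotient.mk
              (Ideal.span {(X ^ (n * p ^ s) - C (α₀ ^ p ^ s) : R[X])})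
              ((X ^ n - C α₀) ^ ω) +
            Ideal.Quotient.mk (Ideal.span {(X ^ (n * p ^ s) - C (α₀ ^ p ^ s) : R[X])})
              (C γ * (X ^ n - C α₀) ^ t) * G,
            Ideal.Quotient.mk (Ideal.span {(X ^ (n * p ^ s) - C (α₀ ^ p ^ s) : R[X])})
              (C γ * (X ^ n - C α₀) ^ μ)}) = p ^ (m * n * (2 * p ^ s - μ - ω))) :=
  stmt10_general p m s n hp hn γ hγ hγ2 hmax hres α₀ hirr
end
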